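/- arXiv:1109.3899 — 4 statements merged into one kernel-verified Lean document; each statement's English description precedes it below -/
import Mathlib

section
/- Under the equivalence relation ∼ generated by the five order-preserving facet gluings, all 10 vertices of the two pentachora (5 green and 5 red) lie in a single equivalence class; i.e., the quotient of the vertex set by ∼ has exactly one element. -/
/-- A face of one of the two pentachora: a colour (`false` = green, `true` = red)
together with a set of vertices (the faces are the pairs whose vertex set is nonempty). -/
abbrev Face : Type := Bool × Finset (Fin 5)

/-- The five order-preserving facet gluings, applied to every nonempty subface of the
source tetrahedron:
green 0124 → red 1234, green 0134 → red 0123, red 0124 → green 0234,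
green 1234 → red 0134, green 0123 → red 0234.
Each vertex map below is the unique order-preserving bijection between the two
4-element vertex sets (entries outside the source set are irrelevant dummies). -/
def glue : Face → Face → Prop := fun x y =>
  (x.1 = false ∧ y.1 = true ∧ x.2.Nonempty ∧ x.2 ⊆ ({0,1,2,4} : Finset (Fin 5)) ∧
    y.2 = x.2.image ![1,2,3,0,4]) ∨
  (x.1 = false ∧ y.1 = true ∧ x.2.Nonempty ∧ x.2 ⊆ ({0,1,3,4} : Finset (Fin 5)) ∧
    y.2 = x.2.image ![0,1,0,2,3]) ∨
  (x.1 = true ∧ y.1 = false ∧ x.2.Nonempty ∧ x.2 ⊆ ({0,1,2,4} : Finset (Fin 5)) ∧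
    y.2 = x.2.image ![0,2,3,0,4]) ∨
  (x.1 = false ∧ y.1 = true ∧ x.2.Nonempty ∧ x.2 ⊆ ({1,2,3,4} : Finset (Fin 5)) ∧
    y.2 = x.2.image ![0,0,1,3,4]) ∨
  (x.1 = false ∧ y.1 = true ∧ x.2.Nonempty ∧ x.2 ⊆ ({0,1,2,3} : Finset (Fin 5)) ∧
    y.2 = x.2.image ![0,2,3,4,0])

/-!
The vertex identifications made by the five gluings already contain a path through all ten
vertices, alternating between the two colours:
red 0 – green 0 – red 1 – green 2 – red 3 – green 4 – red 4 – green 3 – red 2 – green 1.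
-/

open Relation

theorem List.IsChain.eqvGen_of_mem {α : Type*} {r : α → α → Prop} {l : List α}
    (hl : l.IsChain (SymmGen r)) {x y : α} (hx : x ∈ l) (hy : y ∈ l) : EqvGen r x y := by
  have hne : l ≠ [] := List.ne_nil_of_mem hx
  have to_head : ∀ z ∈ l, EqvGen r (l.head hne) z :=
    hl.induction _ _ (fun _ _ hab ha => ha.trans _ _ _ (EqvGen.symmGen_le_eqvGen _ _ _ hab))
      (fun _ => .refl _)
  exact ((to_head x hx).symm _ _).trans _ _ _ (to_head y hy)

instance : DecidableRel glue := fun _ _ => by unfold glue; infer_instance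

def vertexPath : List Face :=
  [(true, {0}), (false, {0}), (true, {1}), (false, {2}), (true, {3}),
    (false, {4}), (true, {4}), (false, {3}), (true, {2}), (false, {1})]

theorem vertexPath_isChain : vertexPath.IsChain (SymmGen glue) := by decide

theorem mem_vertexPath : ∀ (c : Bool) (v : Fin 5), (c, ({v} : Finset (Fin 5))) ∈ vertexPath := by
  decide

/-- All 10 vertices of the two pentachora are identified to a single point by the
equivalence relation generated by the five facet gluings. -/
theorem all_vertices_identified :
    ∀ (c c' : Bool) (v v' : Fin 5),
      Relation.EqvGen glue (c, ({v} : Finset (Fin 5))) (c', ({v'} : Finset (Fin 5))) :=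
  fun c c' v v' => vertexPath_isChain.eqvGen_of_mem (mem_vertexPath c v) (mem_vertexPath c' v')
end

section
/- Under the equivalence relation ∼ generated by the five order-preserving facet gluings, all 20 edges of the two pentachora (10 green and 10 red, one for each 2-element subset of {0,1,2,3,4} in each pentachoron) lie in a single equivalence class; i.e., the glued complex has exactly one edge. -/
/-!
Call two edges adjacent when a single gluing identifies them. The twenty edges, with this
adjacency, form a connected graph: it even has a Hamiltonian path, alternating between green
and red edges, and exhibiting one such path proves that all edges are equivalent.
-/

theorem List.IsChain.eqvGen_of_mem_s1 {α : Type*} {r : α → α → Prop} {l : List α}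
    (hl : l.IsChain (Relation.SymmGen r)) {a b : α} (ha : a ∈ l) (hb : b ∈ l) :
    Relation.EqvGen r a b := by
  obtain ⟨x, xs, rfl⟩ := List.exists_cons_of_ne_nil (List.ne_nil_of_mem ha)
  have hx : ∀ y ∈ x :: xs, Relation.EqvGen r x y :=
    hl.induction _ _
      (fun _ _ hyz hy => hy.trans _ _ _ (Relation.EqvGen.symmGen_le_eqvGen r _ _ hyz))
      fun _ => Relation.EqvGen.refl x
  exact ((hx a ha).symm _ _).trans _ _ _ (hx b hb)

instance inst_s1 : DecidableRel glue := fun x y => by unfold glue; infer_instance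

def edgePath : List Face :=
  [(false, {0, 1}), (true, {0, 1}), (false, {1, 2}), (true, {2, 3}),
   (false, {3, 4}), (true, {2, 4}), (false, {1, 3}), (true, {1, 2}),
   (false, {2, 3}), (true, {3, 4}), (false, {2, 4}), (true, {1, 4}),
   (false, {0, 4}), (true, {0, 3}), (false, {0, 2}), (true, {1, 3}),
   (false, {1, 4}), (true, {0, 4}), (false, {0, 3}), (true, {0, 2})]

theorem edgePath_isChain : edgePath.IsChain fun x y => glue x y ∨ glue y x := by
  decide

theorem mem_edgePath {c : Bool} {s : Finset (Fin 5)} (hs : s.card = 2) : (c, s) ∈ edgePath := by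
  obtain ⟨x, y, hxy, rfl⟩ := Finset.card_eq_two.mp hs
  revert c x y
  decide

/-- All 20 edges of the two pentachora (one for each 2-element subset of {0,…,4} in each
pentachoron) are identified to a single edge by the equivalence relation generated by
the five facet gluings. -/
theorem all_edges_identified :
    ∀ (c c' : Bool) (s t : Finset (Fin 5)), s.card = 2 → t.card = 2 →
      Relation.EqvGen glue (c, s) (c', t) :=
  fun _ _ _ _ hs ht => edgePath_isChain.eqvGen_of_mem_s1 (mem_edgePath hs) (mem_edgePath ht)
end

section
/- In the semidirect product P = ℤ³ ⋊_A ℤ (where 1 ∈ ℤ acts on ℤ³ by v ↦ A·v), the commutator subgroup of P equals the canonical copy of ℤ³ (the elements with trivial ℤ-coordinate); equivalently, the endomorphism v ↦ A·v − v of ℤ³ is bijective, having determinant −1. Consequently the abelianization of P is infinite cyclic. -/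
/-!
Every commutator of `ℤ³ ⋊_A ℤ` lies in the kernel `ℤ³` of the projection to the abelian group `ℤ`.
Conversely, the commutator of the generator of `ℤ` with `w ∈ ℤ³` is `A w - w`, and `A - 1` has
determinant `-1`, so it is invertible over `ℤ` and every element of `ℤ³` arises this way.
The abelianization is then `P ⧸ ℤ³ ≅ ℤ`.
-/

/-- The Cappell–Shaneson matrix `A` with rows `(0,0,1)`, `(1,0,0)`, `(0,1,−1)`. -/
def csMatrix : Matrix (Fin 3) (Fin 3) ℤ := !![0, 0, 1; 1, 0, 0; 0, 1, -1]

/-- The inverse of `csMatrix` over `ℤ`. -/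
def csMatrixInv : Matrix (Fin 3) (Fin 3) ℤ := !![0, 1, 0; 1, 0, 1; 1, 0, 0]

/-- The automorphism `v ↦ A·v` of `ℤ³`. -/
def csAut : (Fin 3 → ℤ) ≃+ (Fin 3 → ℤ) where
  toFun := csMatrix.mulVec
  invFun := csMatrixInv.mulVec
  left_inv v := by
    rw [Matrix.mulVec_mulVec]
    have : csMatrixInv * csMatrix = 1 := by decide
    rw [this, Matrix.one_mulVec]
  right_inv v := by
    rw [Matrix.mulVec_mulVec]
    have : csMatrix * csMatrixInv = 1 := by decide
    rw [this, Matrix.one_mulVec]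
  map_add' x y := Matrix.mulVec_add csMatrix x y

/-- The action of `ℤ` on `ℤ³` in which `1` acts by `v ↦ A·v`, packaged multiplicatively. -/
def csAction : Multiplicative ℤ →* MulAut (Multiplicative (Fin 3 → ℤ)) :=
  zpowersHom _ (AddEquiv.toMultiplicative csAut)

/-- The semidirect product `ℤ³ ⋊_A ℤ`. -/
abbrev CSP : Type :=
  SemidirectProduct (Multiplicative (Fin 3 → ℤ)) (Multiplicative ℤ) csAction

namespace SemidirectProduct

variable {N G : Type*} [Group N]

open scoped commutatorElement in
theorem commutatorElement_inr_inl [Group G] {φ : G →* MulAut N} (g : G) (n : N) :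
    ⁅(inr g : N ⋊[φ] G), (inl n : N ⋊[φ] G)⁆ = inl (φ g n * n⁻¹) := by
  rw [commutatorElement_def, ← map_inv inr, ← inl_aut, ← map_inv inl, ← map_mul]

theorem commutator_le_range_inl [CommGroup G] {φ : G →* MulAut N} :
    commutator (N ⋊[φ] G) ≤ (inl : N →* N ⋊[φ] G).range := by
  rw [range_inl_eq_ker_rightHom]
  exact Abelianization.commutator_subset_ker rightHom

theorem range_inl_le_commutator [Group G] {φ : G →* MulAut N} (g : G)
    (hg : Function.Surjective fun n : N ↦ φ g n * n⁻¹) :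
    (inl : N →* N ⋊[φ] G).range ≤ commutator (N ⋊[φ] G) := by
  rintro _ ⟨m, rfl⟩
  obtain ⟨n, rfl⟩ := hg m
  rw [← commutatorElement_inr_inl]
  exact Subgroup.commutator_mem_commutator (Subgroup.mem_top _) (Subgroup.mem_top _)

noncomputable def abelianizationEquivOfCommutatorEq [Group G] {φ : G →* MulAut N}
    (h : commutator (N ⋊[φ] G) = (inl : N →* N ⋊[φ] G).range) :
    Abelianization (N ⋊[φ] G) ≃* G :=
  (QuotientGroup.quotientMulEquivOfEq (h.trans range_inl_eq_ker_rightHom)).trans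
    (QuotientGroup.quotientKerEquivOfSurjective _ rightHom_surjective)

end SemidirectProduct

theorem Matrix.mulVec_bijective_of_isUnit_det {n R : Type*} [Fintype n] [DecidableEq n]
    [CommRing R] {A : Matrix n n R} (hA : IsUnit A.det) : Function.Bijective A.mulVec :=
  have hA' : IsUnit A := (Matrix.isUnit_iff_isUnit_det A).2 hA
  ⟨Matrix.mulVec_injective_of_isUnit hA', Matrix.mulVec_surjective_iff_isUnit.2 hA'⟩

theorem csMatrix_sub_one_det : (csMatrix - 1).det = -1 := by decide

theorem csMatrix_mulVec_sub_bijective :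
    Function.Bijective (fun v : Fin 3 → ℤ => csMatrix.mulVec v - v) := by
  have hA : (csMatrix - 1).mulVec = fun v ↦ csMatrix.mulVec v - v :=
    funext fun v ↦ by rw [Matrix.sub_mulVec, Matrix.one_mulVec]
  exact hA ▸ Matrix.mulVec_bijective_of_isUnit_det (csMatrix_sub_one_det ▸ isUnit_one.neg)

theorem csAction_ofAdd_one_mul_inv_surjective :
    Function.Surjective fun n : Multiplicative (Fin 3 → ℤ) ↦
      csAction (Multiplicative.ofAdd 1) n * n⁻¹ := by
  intro m
  obtain ⟨w, hw⟩ := csMatrix_mulVec_sub_bijective.2 m.toAdd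
  refine ⟨Multiplicative.ofAdd w, ?_⟩
  have hact : csAction (Multiplicative.ofAdd 1) (Multiplicative.ofAdd w) =
      Multiplicative.ofAdd (csMatrix.mulVec w) := by
    simp [csAction, csAut]
  change csAction _ (Multiplicative.ofAdd w) * (Multiplicative.ofAdd w)⁻¹ = m
  rw [hact, ← ofAdd_neg, ← ofAdd_add, ← sub_eq_add_neg]
  exact congrArg Multiplicative.ofAdd hw

/-- In `P = ℤ³ ⋊_A ℤ`, the commutator subgroup equals the canonical copy of `ℤ³`;
equivalently the endomorphism `v ↦ A·v − v` of `ℤ³` is bijective, with determinant `−1`;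
consequently the abelianization of `P` is infinite cyclic. -/
theorem commutator_csp_eq_inl_range :
    commutator CSP =
      (SemidirectProduct.inl : Multiplicative (Fin 3 → ℤ) →* CSP).range ∧
    Function.Bijective (fun v : Fin 3 → ℤ => csMatrix.mulVec v - v) ∧
    (csMatrix - 1).det = -1 ∧
    Nonempty (Abelianization CSP ≃* Multiplicative ℤ) := by
  have hcomm := le_antisymm SemidirectProduct.commutator_le_range_inl
    (SemidirectProduct.range_inl_le_commutator _ csAction_ofAdd_one_mul_inv_surjective)
  exact ⟨hcomm, csMatrix_mulVec_sub_bijective, csMatrix_sub_one_det,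
    ⟨SemidirectProduct.abelianizationEquivOfCommutatorEq hcomm⟩⟩
end

section
/- Let W be the group presented with generating set {aₙ : n ∈ ℤ} and relators aₙ⁻¹·aₙ₋₁⁻¹·aₙ·aₙ₊₁·aₙ₊₂ and aₙ⁻¹·aₙ₊₂·aₙ₊₃ for all n ∈ ℤ (i.e., the quotient of the free group on the aₙ by the normal closure of all these relators). Then W is free abelian of rank 3: there is an isomorphism W ≅ ℤ³ sending a₀, a₁, a₂ to the three standard basis vectors. -/
/-!
The second relator says `aₙ = aₙ₊₂ aₙ₊₃`, so every `aₙ` lies in the subgroup generated by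
`a₀, a₁, a₂`; combined with it, the first relator says that `aₙ₋₁` and `aₙ` commute. Hence `a₀, a₁, a₂`
commute pairwise and `W` is abelian. As an abelian group, `W` is then `ℤ[t, t⁻¹] / (1 - t² - t³)`
with `aₙ = tⁿ`, which is free on `1, t, t²` because `t³ + t² - 1` is monic with unit constant
term. Concretely, `aₙ ↦ (coordinates of tⁿ)` and `(x₀, x₁, x₂) ↦ a₀^x₀ a₁^x₁ a₂^x₂` are inverse
homomorphisms: both composites send `aₙ` to sequences satisfying the recurrence `uₙ = uₙ₊₂ uₙ₊₃`
that agree with `aₙ` at `n = 0, 1, 2`.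
-/

/-- The relators `aₙ⁻¹·aₙ₋₁⁻¹·aₙ·aₙ₊₁·aₙ₊₂` and `aₙ⁻¹·aₙ₊₂·aₙ₊₃`, for all `n ∈ ℤ`,
in the free group on generators `{aₙ : n ∈ ℤ}`. -/
def wRels : Set (FreeGroup ℤ) :=
  {w | ∃ n : ℤ,
    w = (FreeGroup.of n)⁻¹ * (FreeGroup.of (n - 1))⁻¹ * FreeGroup.of n *
          FreeGroup.of (n + 1) * FreeGroup.of (n + 2) ∨
    w = (FreeGroup.of n)⁻¹ * FreeGroup.of (n + 2) * FreeGroup.of (n + 3)}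

/-- The group `W = ⟨aₙ (n ∈ ℤ) ∣ aₙ⁻¹aₙ₋₁⁻¹aₙaₙ₊₁aₙ₊₂, aₙ⁻¹aₙ₊₂aₙ₊₃ (n ∈ ℤ)⟩`. -/
abbrev W : Type := PresentedGroup wRels

theorem Int.induction_on_three {P : ℤ → Prop} (zero : P 0) (one : P 1) (two : P 2)
    (up : ∀ n, P n → P (n + 2) → P (n + 3)) (down : ∀ n, P (n + 2) → P (n + 3) → P n)
    (n : ℤ) : P n := by
  suffices ∀ m : ℤ, P m ∧ P (m + 1) ∧ P (m + 2) from (this n).1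
  intro m
  induction m using Int.induction_on with
  | zero => exact ⟨zero, by simpa using one, by simpa using two⟩
  | succ i ih =>
    obtain ⟨hi, hi1, hi2⟩ := ih
    exact ⟨hi1, by simpa [add_assoc] using hi2, by simpa [add_assoc] using up i hi hi2⟩
  | pred i ih =>
    obtain ⟨hi, hi1, hi2⟩ := ih
    refine ⟨down _ ?_ ?_, by simpa using hi, by simpa [sub_add] using hi1⟩
    · simpa [sub_add] using hi1
    · simpa [sub_add] using hi2

theorem eq_of_recurrence {M : Type*} [LeftCancelMonoid M] {f g : ℤ → M}
    (hf : ∀ n, f n = f (n + 2) * f (n + 3)) (hg : ∀ n, g n = g (n + 2) * g (n + 3))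
    (h0 : f 0 = g 0) (h1 : f 1 = g 1) (h2 : f 2 = g 2) : f = g := by
  funext n
  induction n using Int.induction_on_three with
  | zero => exact h0
  | one => exact h1
  | two => exact h2
  | up n hn hn2 => exact mul_left_cancel (by rw [← hf, hn, hn2, ← hg])
  | down n hn2 hn3 => rw [hf, hg, hn2, hn3]

theorem mem_closure_of_recurrence {G : Type*} [Group G] {f : ℤ → G}
    (hf : ∀ n, f n = f (n + 2) * f (n + 3)) (n : ℤ) :
    f n ∈ Subgroup.closure {f 0, f 1, f 2} := by
  induction n using Int.induction_on_three with
  | zero | one | two => exact Subgroup.subset_closure (by simp)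
  | up n hn hn2 =>
    rw [eq_inv_mul_of_mul_eq (hf n).symm]
    exact mul_mem (inv_mem hn2) hn
  | down n hn2 hn3 => exact hf n ▸ mul_mem hn2 hn3

theorem commute_of_closure_eq_top {G : Type*} [Group G] {s : Set G}
    (hs : Subgroup.closure s = ⊤) (hcomm : ∀ x ∈ s, ∀ y ∈ s, Commute x y) (x y : G) :
    Commute x y := by
  have hle : Subgroup.closure s ≤ Subgroup.centralizer (Subgroup.closure s) := by
    rw [Subgroup.centralizer_closure, Subgroup.closure_le]
    exact fun x hx => Subgroup.mem_centralizer_iff.mpr fun y hy => hcomm y hy x hx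
  rw [hs] at hle
  exact Subgroup.mem_centralizer_iff.mp (hle (Subgroup.mem_top y)) x (Subgroup.mem_top x)

namespace W

abbrev a (n : ℤ) : W := PresentedGroup.of n

theorem a_eq_mul (n : ℤ) : a n = a (n + 2) * a (n + 3) := by
  have h := PresentedGroup.one_of_mem (rels := wRels) ⟨n, Or.inr rfl⟩
  change (a n)⁻¹ * a (n + 2) * a (n + 3) = 1 at h
  rwa [mul_assoc, inv_mul_eq_one] at h

theorem commute_a_sub_one (n : ℤ) : Commute (a (n - 1)) (a n) := by
  have h := PresentedGroup.one_of_mem (rels := wRels) ⟨n, Or.inl rfl⟩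
  change (a n)⁻¹ * (a (n - 1))⁻¹ * a n * a (n + 1) * a (n + 2) = 1 at h
  have hrec := a_eq_mul (n - 1)
  rw [show n - 1 + 2 = n + 1 by ring, show n - 1 + 3 = n + 2 by ring] at hrec
  -- `h` becomes `⁅(a n)⁻¹, (a (n - 1))⁻¹⁆ = 1`
  rw [mul_assoc _ (a (n + 1)), ← hrec] at h
  exact (Commute.inv_inv_iff.mp (commutatorElement_eq_one_iff_commute.mp h)).symm

theorem closure_a_012 : Subgroup.closure {a 0, a 1, a 2} = ⊤ := by
  rw [eq_top_iff, ← PresentedGroup.closure_range_of, Subgroup.closure_le]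
  rintro _ ⟨n, rfl⟩
  exact mem_closure_of_recurrence a_eq_mul n

theorem commute_a_012 :
    ∀ x ∈ ({a 0, a 1, a 2} : Set W), ∀ y ∈ ({a 0, a 1, a 2} : Set W), Commute x y := by
  have h01 : Commute (a 0) (a 1) := by simpa using commute_a_sub_one 1
  have h12 : Commute (a 1) (a 2) := by simpa using commute_a_sub_one 2
  have h02 : Commute (a 0) (a 2) := by
    have hrec : a (-1) = a 1 * a 2 := by simpa using a_eq_mul (-1)
    have h0m : Commute (a 0) (a 1 * a 2) := by simpa [hrec] using (commute_a_sub_one 0).symm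
    simpa using h01.inv_right.mul_right h0m
  simp only [Set.mem_insert_iff, Set.mem_singleton_iff]
  rintro x (rfl | rfl | rfl) y (rfl | rfl | rfl)
  exacts [.refl _, h01, h02, h01.symm, .refl _, h12, h02.symm, h12.symm, .refl _]

instance : CommGroup W where
  mul_comm := commute_of_closure_eq_top closure_a_012 commute_a_012

/-- Multiplication by `t` on `ℤ[t] / (t³ + t² - 1)` in the basis `1, t, t²`, acting on row
vectors; so `coord n` below is the coordinate vector of `tⁿ`. -/
def mulT : (Matrix (Fin 3) (Fin 3) ℤ)ˣ :=
  ⟨!![0, 1, 0; 0, 0, 1; 1, 0, -1], !![0, 1, 1; 1, 0, 0; 0, 1, 0], by decide, by decide⟩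

theorem mulT_sq_add_cube :
    (mulT : Matrix (Fin 3) (Fin 3) ℤ) ^ 2 + (mulT : Matrix (Fin 3) (Fin 3) ℤ) ^ 3 = 1 := by
  decide

def coord (n : ℤ) : Fin 3 → ℤ := (↑(mulT ^ n) : Matrix (Fin 3) (Fin 3) ℤ) 0

theorem coord_eq_add (n : ℤ) : coord n = coord (n + 2) + coord (n + 3) := by
  have h : (↑(mulT ^ n) : Matrix (Fin 3) (Fin 3) ℤ) = ↑(mulT ^ (n + 2)) + ↑(mulT ^ (n + 3)) := by
    rw [zpow_add, zpow_add, Units.val_mul, Units.val_mul, ← mul_add, zpow_ofNat, zpow_ofNat,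
      Units.val_pow_eq_pow_val, Units.val_pow_eq_pow_val, mulT_sq_add_cube, mul_one]
  exact congrFun h 0

theorem coord_zero : coord 0 = Pi.single 0 1 := by decide

theorem coord_one : coord 1 = Pi.single 1 1 := by decide

theorem coord_two : coord 2 = Pi.single 2 1 := by decide

theorem coord_fin (i : Fin 3) : coord (i : ℕ) = Pi.single i 1 := by
  fin_cases i
  exacts [coord_zero, coord_one, coord_two]

def toZ3 : W →* Multiplicative (Fin 3 → ℤ) :=
  PresentedGroup.toGroup (f := fun n => .ofAdd (coord n)) <| by
    rintro r ⟨n, rfl | rfl⟩ <;>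
      simp only [map_mul, map_inv, FreeGroup.lift_apply_of, ← ofAdd_neg, ← ofAdd_add, ofAdd_eq_one]
    · rw [coord_eq_add (n - 1), show n - 1 + 2 = n + 1 by ring, show n - 1 + 3 = n + 2 by ring]
      abel
    · rw [coord_eq_add n]
      abel

theorem toZ3_a (n : ℤ) : toZ3 (a n) = .ofAdd (coord n) :=
  PresentedGroup.toGroup.of _

def ofZ3 : Multiplicative (Fin 3 → ℤ) →* W where
  toFun x := ∏ i : Fin 3, a (i : ℕ) ^ x.toAdd i
  map_one' := by simp
  map_mul' x y := by simp [zpow_add, Finset.prod_mul_distrib]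

theorem ofZ3_single (i : Fin 3) : ofZ3 (.ofAdd (Pi.single i 1)) = a (i : ℕ) := by
  simp [ofZ3, Pi.single_apply]

theorem ofZ3_toZ3_a (n : ℤ) : ofZ3 (toZ3 (a n)) = a n := by
  have hrec (n : ℤ) : ofZ3 (toZ3 (a n)) = ofZ3 (toZ3 (a (n + 2))) * ofZ3 (toZ3 (a (n + 3))) := by
    simp only [toZ3_a, ← map_mul, ← ofAdd_add, ← coord_eq_add]
  refine congrFun (eq_of_recurrence hrec a_eq_mul ?_ ?_ ?_) n
  · rw [toZ3_a, coord_zero]; exact ofZ3_single 0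
  · rw [toZ3_a, coord_one]; exact ofZ3_single 1
  · rw [toZ3_a, coord_two]; exact ofZ3_single 2

theorem toZ3_ofZ3 (x : Multiplicative (Fin 3 → ℤ)) : toZ3 (ofZ3 x) = x := by
  simp only [ofZ3, MonoidHom.coe_mk, OneHom.coe_mk, map_prod, map_zpow, toZ3_a, coord_fin,
    ← ofAdd_zsmul, ← ofAdd_sum, ← Pi.single_smul', smul_eq_mul, mul_one, Finset.univ_sum_single]
  rfl

def equivZ3 : W ≃* Multiplicative (Fin 3 → ℤ) :=
  toZ3.toMulEquiv ofZ3 (PresentedGroup.ext ofZ3_toZ3_a) (MonoidHom.ext toZ3_ofZ3)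

end W

/-- `W` is free abelian of rank 3: there is an isomorphism `W ≅ ℤ³` sending
`a₀, a₁, a₂` to the three standard basis vectors. -/
theorem W_free_abelian_rank_three :
    ∃ ψ : W ≃* Multiplicative (Fin 3 → ℤ),
      ψ (PresentedGroup.of 0) = Multiplicative.ofAdd (Pi.single 0 1) ∧
      ψ (PresentedGroup.of 1) = Multiplicative.ofAdd (Pi.single 1 1) ∧
      ψ (PresentedGroup.of 2) = Multiplicative.ofAdd (Pi.single 2 1) :=
  ⟨W.equivZ3, W.coord_zero ▸ W.toZ3_a 0, W.coord_one ▸ W.toZ3_a 1, W.coord_two ▸ W.toZ3_a 2⟩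
end
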